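/- Suppose a graph G contains a cycle C of length n-1 but no cycle of length n, the independence number of G equals m-1 where m ≤ (n+2)/2, and Y = {y_1, ..., y_{m-1}} is an independent set of m-1 vertices of G disjoint from V(C). Then the number of edges of G with one endpoint in Y and the other in V(C) is at most (m-1)(m-3). -/

import Mathlib

/-!
Write `L = n - 1` for the length of `C = u₀ u₁ … u_{L-1}`, and for `x ∉ V(C)` let `N(x)` be the set
of indices `i` with `x ~ uᵢ`. A cycle of length `L + 1` arises by rerouting `C` through `x` if `x`
is adjacent to two consecutive `uᵢ, uᵢ₊₁`, or if `x ~ uᵢ, x ~ uⱼ` and `uᵢ₊₁ ~ uⱼ₊₁`. Hence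
`{x} ∪ {uᵢ₊₁ | i ∈ N(x)}` is independent and `|N(x)| ≤ m - 2`.

Suppose `|N(y)| = m - 2` for some `y ∈ Y`, so that this set is a maximum independent set. Since
`2 |N(y)| < L`, some `j ∈ N(y)` has `j + 2 ∉ N(y)`. As `Y` is a maximum independent set, `u_{j+2}`
has a neighbour `y' ∈ Y`, and `y' ≠ y`; as `{y} ∪ {uᵢ₊₁}` is one too, `y' ~ uᵢ₊₁` for some
`i ∈ N(y)`. Then `y uⱼ uⱼ₋₁ … uᵢ₊₁ y' u_{j+2} … uᵢ y` is a cycle of length `L + 1`. So every vertex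
of `Y` has at most `m - 3` neighbours on `C`.
-/

open SimpleGraph

/-- `G` contains a cycle of length `n` (as a subgraph). -/
def HasCycleOfLength {V : Type*} (G : SimpleGraph V) (n : ℕ) : Prop :=
  ∃ (v : V) (w : G.Walk v v), w.IsCycle ∧ w.length = n

theorem List.notMem_map_of_notMem_range {ι V : Type*} {u : ι → V} {x : V}
    (hx : x ∉ Set.range u) (l : List ι) : x ∉ l.map u :=
  fun h => hx ((List.mem_map.1 h).imp fun _ h => h.2)

namespace ZMod

variable {L : ℕ}

theorem exists_add_natCast_eq [NeZero L] (i j : ZMod L) : ∃ d : ℕ, d < L ∧ i + d = j :=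
  ⟨(j - i).val, val_lt _, by rw [natCast_zmod_val]; ring⟩

theorem exists_mem_add_two_notMem {s : Finset (ZMod L)} (hs : s.Nonempty)
    (hcard : 2 * s.card < L) : ∃ j ∈ s, j + 2 ∉ s := by
  by_contra! h
  obtain ⟨j, hj⟩ := hs
  have hmem : ∀ t : ℕ, j + ((2 * t : ℕ) : ZMod L) ∈ s := by
    intro t
    induction t with
    | zero => simpa using hj
    | succ t ih => simpa [mul_add, add_assoc] using h _ ih
  have hinj : Set.InjOn (fun t : ℕ => j + ((2 * t : ℕ) : ZMod L)) (Finset.range (s.card + 1)) := by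
    intro t ht t' ht' htt'
    simp only [Finset.coe_range, Set.mem_Iio] at ht ht'
    have := congrArg val (add_left_cancel htt')
    rw [val_cast_of_lt (by omega), val_cast_of_lt (by omega)] at this
    omega
  simpa using Finset.card_le_card_of_injOn _ (fun t _ => hmem t) hinj

end ZMod

section CycleArc

variable {L : ℕ}

def cycleArc (a : ZMod L) (d : ℕ) : List (ZMod L) :=
  (List.range d).map fun s : ℕ => a + (s : ZMod L)

@[simp]
theorem length_cycleArc (a : ZMod L) (d : ℕ) : (cycleArc a d).length = d := by
  simp [cycleArc]

theorem cycleArc_add (a : ZMod L) (d e : ℕ) :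
    cycleArc a (d + e) = cycleArc a d ++ cycleArc (a + (d : ZMod L)) e := by
  simp [cycleArc, List.range_add, add_assoc]

@[simp]
theorem head?_cycleArc (a : ZMod L) (d : ℕ) : (cycleArc a (d + 1)).head? = some a := by
  simp [cycleArc, List.range_succ_eq_map]

@[simp]
theorem getLast?_cycleArc (a : ZMod L) (d : ℕ) :
    (cycleArc a (d + 1)).getLast? = some (a + (d : ZMod L)) := by
  simp [cycleArc, List.range_succ]

theorem nodup_cycleArc [NeZero L] (a : ZMod L) {d : ℕ} (hd : d ≤ L) : (cycleArc a d).Nodup := by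
  refine List.Nodup.map_on (fun s hs t ht hst => ?_) List.nodup_range
  rw [List.mem_range] at hs ht
  have := congrArg ZMod.val (add_left_cancel hst)
  rwa [ZMod.val_cast_of_lt (by omega), ZMod.val_cast_of_lt (by omega)] at this

theorem isChain_cycleArc (a : ZMod L) (d : ℕ) :
    (cycleArc a d).IsChain (fun i j => j = i + 1) := by
  rw [cycleArc, List.isChain_map, List.isChain_range]
  intro s _
  push_cast
  ring

end CycleArc

namespace SimpleGraph

variable {V : Type*} {G : SimpleGraph V}

theorem hasCycleOfLength_of_isChain {x : V} {l : List V} (hnodup : (x :: l).Nodup)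
    (hlen : 2 ≤ l.length) (hchain : (x :: (l ++ [x])).IsChain G.Adj) :
    HasCycleOfLength G (l.length + 1) := by
  obtain ⟨w, hw⟩ : ∃ w : G.Walk x x, w.support = x :: (l ++ [x]) :=
    ⟨(Walk.ofSupport _ (List.cons_ne_nil _ _) hchain).copy (by simp) (by simp),
      (Walk.support_copy _ _ _).trans (Walk.support_ofSupport _ _)⟩
  have hlength : w.length = l.length + 1 := by
    simpa [hw] using w.length_support.symm
  refine ⟨x, w, ?_, hlength⟩
  rw [Walk.isCycle_iff_isPath_tail_and_le_length, Walk.isPath_def,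
    Walk.support_tail_of_not_nil _ (Walk.not_nil_iff_lt_length.2 (by omega)), hw]
  exact ⟨List.nodup_middle.2 (by simpa using hnodup), by omega⟩

theorem exists_adj_of_isIndepSet_of_notMem [DecidableEq V] {s : Finset V}
    (hs : G.IsIndepSet s) (hmax : ∀ t : Finset V, G.IsIndepSet t → t.card ≤ s.card) {v : V}
    (hv : v ∉ s) : ∃ w ∈ s, G.Adj w v := by
  by_contra! h
  have hindep : G.IsIndepSet (insert v s : Finset V) := by
    rw [Finset.coe_insert]
    exact hs.insert fun w hw _ => ⟨fun hvw => h w hw hvw.symm, h w hw⟩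
  have := hmax _ hindep
  rw [Finset.card_insert_of_notMem hv] at this
  omega

theorem isChain_map_cycleArc {L : ℕ} {u : ZMod L → V} (hcyc : ∀ i, G.Adj (u i) (u (i + 1)))
    (a : ZMod L) (d : ℕ) : ((cycleArc a d).map u).IsChain G.Adj :=
  List.isChain_map_of_isChain u (fun _ _ h => h ▸ hcyc _) (isChain_cycleArc a d)

section LongerCycle

variable {L : ℕ} [NeZero L] {u : ZMod L → V}

/-- The new cycle is `x uᵢ uᵢ₋₁ … uⱼ₊₁ uᵢ₊₁ uᵢ₊₂ … uⱼ x`. -/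
theorem hasCycleOfLength_succ_of_adj_succ_succ (hu : u.Injective)
    (hcyc : ∀ i, G.Adj (u i) (u (i + 1))) {x : V} (hx : x ∉ Set.range u) {i j : ZMod L}
    (hi : G.Adj x (u i)) (hj : G.Adj x (u j)) (hij : G.Adj (u (i + 1)) (u (j + 1))) :
    HasCycleOfLength G (L + 1) := by
  obtain ⟨d, hdL, rfl⟩ := ZMod.exists_add_natCast_eq i j
  obtain _ | d := d
  · simp at hij
  obtain ⟨k, hk⟩ : ∃ k, L = d + 1 + (k + 1) := ⟨L - d - 2, by omega⟩
  have hL : ((d + 1 + (k + 1) : ℕ) : ZMod L) = 0 := hk ▸ ZMod.natCast_self L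
  push_cast at hL hj hij
  have harc : cycleArc (i + (d + 1 : ZMod L) + 1) (k + 1) ++ cycleArc (i + 1) (d + 1) =
      cycleArc (i + (d + 1 : ZMod L) + 1) (k + 1 + (d + 1)) := by
    rw [cycleArc_add _ (k + 1)]
    congr 2
    push_cast
    linear_combination -hL
  set arc₁ := cycleArc (i + (d + 1 : ZMod L) + 1) (k + 1)
  set arc₂ := cycleArc (i + 1) (d + 1)
  convert hasCycleOfLength_of_isChain (x := x) (l := (arc₁.reverse ++ arc₂).map u) ?_ ?_ ?_
    using 2
  · simp [arc₁, arc₂]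
    omega
  · refine List.nodup_cons.2 ⟨List.notMem_map_of_notMem_range hx _, List.Nodup.map hu ?_⟩
    exact ((List.reverse_perm _).append_right _).nodup_iff.2 (harc ▸ nodup_cycleArc _ (by omega))
  · simp [arc₁, arc₂]
    omega
  · have h₁ := isChain_map_cycleArc hcyc (i + (d + 1 : ZMod L) + 1) (k + 1)
    have h₂ := isChain_map_cycleArc hcyc (i + 1) (d + 1)
    have e₁ : i + (d + 1 : ZMod L) + 1 + k = i := by linear_combination hL
    have e₂ : i + 1 + (d : ZMod L) = i + (d + 1) := by ring
    simp [arc₁, arc₂, List.isChain_cons, List.isChain_append, List.isChain_reverse, e₁, e₂,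
      hi, hj.symm, hij.symm, h₂, h₁.imp fun _ _ h => h.symm]

theorem hasCycleOfLength_succ_of_adj_of_adj_succ (hu : u.Injective)
    (hcyc : ∀ i, G.Adj (u i) (u (i + 1))) {x : V} (hx : x ∉ Set.range u) {i : ZMod L}
    (hi : G.Adj x (u i)) (hi' : G.Adj x (u (i + 1))) : HasCycleOfLength G (L + 1) :=
  hasCycleOfLength_succ_of_adj_succ_succ hu hcyc hx hi' hi (hcyc (i + 1)).symm

/-- The new cycle is `x uⱼ uⱼ₋₁ … uᵢ₊₁ x' uⱼ₊₂ uⱼ₊₃ … uᵢ x`. -/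
theorem hasCycleOfLength_succ_of_adj_succ_of_adj_add_two (hu : u.Injective)
    (hcyc : ∀ i, G.Adj (u i) (u (i + 1))) {x x' : V} (hxx' : x ≠ x') (hx : x ∉ Set.range u)
    (hx' : x' ∉ Set.range u) {i j : ZMod L} (hi : G.Adj x (u i)) (hj : G.Adj x (u j))
    (hi' : G.Adj x' (u (i + 1))) (hj' : G.Adj x' (u (j + 2))) :
    HasCycleOfLength G (L + 1) := by
  obtain ⟨d, hdL, rfl⟩ := ZMod.exists_add_natCast_eq i j
  obtain _ | d := d
  · refine hasCycleOfLength_succ_of_adj_of_adj_succ hu hcyc hx' hi' ?_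
    simpa [add_assoc, one_add_one_eq_two] using hj'
  obtain ⟨k, hk⟩ | hd : (∃ k, L = d + 1 + 1 + (k + 1)) ∨ L = d + 1 + 1 := by
    rcases Nat.lt_or_ge (d + 2) L with h | h
    · exact .inl ⟨L - d - 3, by omega⟩
    · exact .inr (by omega)
  swap
  · refine hasCycleOfLength_succ_of_adj_of_adj_succ hu hcyc hx hj ?_
    have hL : ((d + 1 + 1 : ℕ) : ZMod L) = 0 := hd ▸ ZMod.natCast_self L
    push_cast at hL ⊢
    convert hi using 2
    linear_combination hL
  have hL : ((d + 1 + 1 + (k + 1) : ℕ) : ZMod L) = 0 := hk ▸ ZMod.natCast_self L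
  push_cast at hL hj hj'
  have harc : (cycleArc (i + 1) (d + 1) ++ cycleArc (i + (d + 1 : ZMod L) + 2) (k + 1)).Sublist
      (cycleArc (i + 1) (d + 1 + 1 + (k + 1))) := by
    have e : i + 1 + ((d + 1 + 1 : ℕ) : ZMod L) = i + (d + 1 : ZMod L) + 2 := by push_cast; ring
    rw [cycleArc_add _ (d + 1 + 1), cycleArc_add _ (d + 1), List.append_assoc, e]
    exact (List.sublist_append_right _ _).append_left _
  set arc₁ := cycleArc (i + 1) (d + 1)
  set arc₂ := cycleArc (i + (d + 1 : ZMod L) + 2) (k + 1)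
  convert hasCycleOfLength_of_isChain (x := x) (l := arc₁.reverse.map u ++ x' :: arc₂.map u)
    ?_ ?_ ?_ using 2
  · simp [arc₁, arc₂]
    omega
  · have hperm : (arc₁.reverse.map u ++ x' :: arc₂.map u).Perm
        (x' :: (arc₁.reverse ++ arc₂).map u) := by
      rw [List.map_append]
      exact List.perm_middle
    have hnodup : (arc₁.reverse ++ arc₂).Nodup :=
      ((List.reverse_perm _).append_right _).nodup_iff.2 (harc.nodup (nodup_cycleArc _ hk.ge))
    refine (hperm.cons x).nodup_iff.2 (List.nodup_cons.2 ⟨?_, List.nodup_cons.2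
      ⟨List.notMem_map_of_notMem_range hx' _, hnodup.map hu⟩⟩)
    exact fun h => (List.mem_cons.1 h).elim hxx' (List.notMem_map_of_notMem_range hx _)
  · simp [arc₁, arc₂]
    omega
  · have h₁ := isChain_map_cycleArc hcyc (i + 1) (d + 1)
    have h₂ := isChain_map_cycleArc hcyc (i + (d + 1 : ZMod L) + 2) (k + 1)
    have e₁ : i + (d + 1 : ZMod L) + 2 + k = i := by linear_combination hL
    have e₂ : i + 1 + (d : ZMod L) = i + (d + 1) := by ring
    simp [arc₁, arc₂, List.isChain_cons, List.isChain_append, List.isChain_reverse, e₁, e₂,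
      hi.symm, hj, hi'.symm, hj', h₂, h₁.imp fun _ _ h => h.symm]

end LongerCycle

open Classical in
noncomputable def neighborIndices {κ : Type*} [Fintype κ] (G : SimpleGraph V) (u : κ → V)
    (x : V) : Finset κ :=
  {i | G.Adj x (u i)}

@[simp]
theorem mem_neighborIndices {κ : Type*} [Fintype κ] {u : κ → V} {x : V} {i : κ} :
    i ∈ G.neighborIndices u x ↔ G.Adj x (u i) := by
  simp [neighborIndices]

theorem ncard_adj_range_le_sum {ι κ : Type*} [Fintype ι] [Fintype κ] (y : ι → V) (u : κ → V) :
    {p : V × V | p.1 ∈ Set.range y ∧ p.2 ∈ Set.range u ∧ G.Adj p.1 p.2}.ncard ≤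
      ∑ k, (G.neighborIndices u (y k)).card := by
  classical
  calc {p : V × V | p.1 ∈ Set.range y ∧ p.2 ∈ Set.range u ∧ G.Adj p.1 p.2}.ncard
      ≤ ((fun q : ι × κ => (y q.1, u q.2)) '' {q | G.Adj (y q.1) (u q.2)}).ncard := by
        refine Set.ncard_le_ncard ?_ (Set.toFinite _)
        rintro ⟨_, _⟩ ⟨⟨k, rfl⟩, ⟨i, rfl⟩, hadj⟩
        exact ⟨(k, i), hadj, rfl⟩
    _ ≤ {q : ι × κ | G.Adj (y q.1) (u q.2)}.ncard := Set.ncard_image_le (Set.toFinite _)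
    _ = ∑ k, (G.neighborIndices u (y k)).card := by
        rw [Set.ncard_eq_toFinset_card', Set.toFinset_ofPred, Finset.card_filter,
          Fintype.sum_prod_type]
        refine Finset.sum_congr rfl fun k _ => ?_
        rw [neighborIndices, Finset.card_filter]

section SuccNeighbors

variable {L : ℕ} [NeZero L] {u : ZMod L → V}

open Classical in
noncomputable def succNeighbors (G : SimpleGraph V) (u : ZMod L → V) (x : V) : Finset V :=
  insert x ((G.neighborIndices u x).image fun i => u (i + 1))

theorem card_succNeighbors (hu : u.Injective) {x : V} (hx : x ∉ Set.range u) :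
    (G.succNeighbors u x).card = (G.neighborIndices u x).card + 1 := by
  classical
  rw [succNeighbors, Finset.card_insert_of_notMem, Finset.card_image_of_injective]
  · exact fun i j h => add_right_cancel (hu h)
  · simp only [Finset.mem_image, not_exists, not_and]
    exact fun i _ h => hx ⟨_, h⟩

theorem isIndepSet_succNeighbors (hu : u.Injective) (hcyc : ∀ i, G.Adj (u i) (u (i + 1)))
    (hno : ¬ HasCycleOfLength G (L + 1)) {x : V} (hx : x ∉ Set.range u) :
    G.IsIndepSet (G.succNeighbors u x : Set V) := by
  classical
  rw [succNeighbors, Finset.coe_insert, Finset.coe_image]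
  refine Set.Pairwise.insert ?_ ?_
  · rintro _ ⟨i, hi, rfl⟩ _ ⟨j, hj, rfl⟩ - hadj
    simp only [Finset.mem_coe, mem_neighborIndices] at hi hj
    exact hno (hasCycleOfLength_succ_of_adj_succ_succ hu hcyc hx hi hj hadj)
  · rintro _ ⟨i, hi, rfl⟩ -
    simp only [Finset.mem_coe, mem_neighborIndices] at hi
    have h := fun hadj => hno (hasCycleOfLength_succ_of_adj_of_adj_succ hu hcyc hx hi hadj)
    exact ⟨h, fun hadj => h hadj.symm⟩

theorem card_neighborIndices_le_sub_two (hu : u.Injective)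
    (hcyc : ∀ i, G.Adj (u i) (u (i + 1))) (hno : ¬ HasCycleOfLength G (L + 1)) {Y : Finset V}
    (hY : G.IsIndepSet Y) (hmax : ∀ t : Finset V, G.IsIndepSet t → t.card ≤ Y.card)
    (hYu : ∀ y ∈ Y, y ∉ Set.range u) (hYL : 2 * Y.card ≤ L + 1) {x : V} (hx : x ∈ Y) :
    (G.neighborIndices u x).card ≤ Y.card - 2 := by
  classical
  by_contra! hbig
  have hxu := hYu x hx
  have hS := isIndepSet_succNeighbors hu hcyc hno hxu
  have hScard := card_succNeighbors (G := G) hu hxu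
  have hSle := hmax _ hS
  have hSmax : ∀ t : Finset V, G.IsIndepSet t → t.card ≤ (G.succNeighbors u x).card :=
    fun t ht => (hmax t ht).trans (by omega)
  obtain ⟨j, hj, hj₂⟩ :=
    ZMod.exists_mem_add_two_notMem (s := G.neighborIndices u x) (Finset.card_pos.1 (by omega))
      (by omega)
  obtain ⟨x', hx'Y, hx'j⟩ :=
    exists_adj_of_isIndepSet_of_notMem hY hmax fun h => hYu _ h ⟨_, rfl⟩
  have hxx' : x ≠ x' := by
    rintro rfl
    exact hj₂ (mem_neighborIndices.2 hx'j)
  have hx'S : x' ∉ G.succNeighbors u x := by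
    rw [succNeighbors, Finset.mem_insert, Finset.mem_image, not_or, not_exists]
    exact ⟨hxx'.symm, fun i hi => hYu x' hx'Y ⟨_, hi.2⟩⟩
  obtain ⟨w, hw, hwx'⟩ := exists_adj_of_isIndepSet_of_notMem hS hSmax hx'S
  rw [succNeighbors, Finset.mem_insert, Finset.mem_image] at hw
  obtain rfl | ⟨i, hi, rfl⟩ := hw
  · exact hY hx hx'Y hxx' hwx'
  · exact hno (hasCycleOfLength_succ_of_adj_succ_of_adj_add_two hu hcyc hxx' hxu (hYu x' hx'Y)
      (mem_neighborIndices.1 hi) (mem_neighborIndices.1 hj) hwx'.symm hx'j)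

end SuccNeighbors

end SimpleGraph

theorem edges_between_indepSet_and_cycle_general (n m : ℕ) (hn : 4 ≤ n) (hm : 2 * m ≤ n + 2)
    {V : Type*} (G : SimpleGraph V)
    (u : ZMod (n - 1) → V) (hu : Function.Injective u)
    (hcyc : ∀ i : ZMod (n - 1), G.Adj (u i) (u (i + 1)))
    (hno : ¬ HasCycleOfLength G n)
    (hα_le : ∀ s : Finset V, (s : Set V).Pairwise (fun a b => ¬ G.Adj a b) → s.card ≤ m - 1)
    (y : Fin (m - 1) → V) (hyinj : Function.Injective y)
    (hyY : ∀ k, y k ∉ Set.range u)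
    (hyind : ∀ k l, k ≠ l → ¬ G.Adj (y k) (y l)) :
    ({p : V × V | p.1 ∈ Set.range y ∧ p.2 ∈ Set.range u ∧ G.Adj p.1 p.2}).ncard ≤
      (m - 1) * (m - 3) := by
  classical
  have : NeZero (n - 1) := ⟨by omega⟩
  have hno' : ¬ HasCycleOfLength G (n - 1 + 1) := by rwa [Nat.sub_add_cancel (by omega)]
  set Y := Finset.univ.image y
  have hYcard : Y.card = m - 1 := by
    rw [Finset.card_image_of_injective _ hyinj, Finset.card_univ, Fintype.card_fin]
  have hY : G.IsIndepSet Y := by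
    simp only [Y, Finset.coe_image, Finset.coe_univ, Set.image_univ]
    rintro _ ⟨k, rfl⟩ _ ⟨l, rfl⟩ hne
    exact hyind k l fun h => hne (h ▸ rfl)
  have hYu : ∀ v ∈ Y, v ∉ Set.range u := by
    simp only [Y, Finset.mem_image, Finset.mem_univ, true_and, forall_exists_index]
    rintro _ k rfl
    exact hyY k
  calc _ ≤ ∑ k, (G.neighborIndices u (y k)).card := G.ncard_adj_range_le_sum y u
    _ ≤ ∑ _k : Fin (m - 1), (m - 3) := by
        refine Finset.sum_le_sum fun k _ => ?_
        have := G.card_neighborIndices_le_sub_two hu hcyc hno' hY (hYcard ▸ hα_le) hYu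
          (by omega) (Finset.mem_image_of_mem y (Finset.mem_univ k))
        omega
    _ = (m - 1) * (m - 3) := by simp

/-- Suppose `G` contains a cycle `C` of length `n-1` (encoded by an injective map
`u : ZMod (n-1) → V` with consecutive vertices adjacent) but no cycle of length `n`,
the independence number of `G` equals `m-1` where `m ≤ (n+2)/2`, and
`Y = {y_1, …, y_{m-1}}` is an independent set of `m-1` vertices of `G` disjoint from
`V(C)`.  Then the number of edges of `G` with one endpoint in `Y` and the other in
`V(C)` is at most `(m-1)(m-3)`. -/
theorem edges_between_indepSet_and_cycle (n m : ℕ) (hn : 4 ≤ n) (hm : 2 * m ≤ n + 2)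
    {V : Type*} (G : SimpleGraph V)
    (u : ZMod (n - 1) → V) (hu : Function.Injective u)
    (hcyc : ∀ i : ZMod (n - 1), G.Adj (u i) (u (i + 1)))
    (hno : ¬ HasCycleOfLength G n)
    (hα_le : ∀ s : Finset V, (s : Set V).Pairwise (fun a b => ¬ G.Adj a b) → s.card ≤ m - 1)
    (hα_eq : ∃ s : Finset V, s.card = m - 1 ∧
      (s : Set V).Pairwise (fun a b => ¬ G.Adj a b))
    (y : Fin (m - 1) → V) (hyinj : Function.Injective y)
    (hyY : ∀ k, y k ∉ Set.range u)
    (hyind : ∀ k l, k ≠ l → ¬ G.Adj (y k) (y l)) :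
    ({p : V × V | p.1 ∈ Set.range y ∧ p.2 ∈ Set.range u ∧ G.Adj p.1 p.2}).ncard ≤
      (m - 1) * (m - 3) :=
  edges_between_indepSet_and_cycle_general n m hn hm G u hu hcyc hno hα_le y hyinj hyY hyind
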